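/- arXiv:2604.27055 — 5 statements merged into one kernel-verified Lean document; each statement's English description precedes it below -/
import Mathlib

section
/- For any real r×s matrix A and any natural number α ≥ 1, the sum of the 2α-th powers of the absolute values of the entries of A is bounded by the trace of the α-th power of the Gram matrix: ∑_{i=1}^{r} ∑_{j=1}^{s} |A_{ij}|^{2α} ≤ Tr[(AᵀA)^{α}]. (Since Tr[(AᵀA)^{α}] = ∑_k σ_k(A)^{2α}, this bounds the entrywise ℓ_{2α} norm by the Schatten 2α-norm.) -/
/-!
Column by column: superadditivity of `x ↦ x ^ α` on `[0, ∞)` gives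
`∑ᵢ |Aᵢⱼ|^(2α) ≤ ((AᵀA)ⱼⱼ)^α`. For a positive semidefinite `B = U diag(λ) Uᵀ` the diagonal
entries of its powers are `(B^k)ⱼⱼ = ∑ₗ Uⱼₗ² λₗ^k`, averages of `λₗ^k` with weights `Uⱼₗ²` summing
to `1`, so Jensen's inequality for the convex map `x ↦ x ^ k` yields `(Bⱼⱼ)^k ≤ (B^k)ⱼⱼ`.
-/

open Matrix BigOperators

theorem Finset.sum_pow_le_pow_sum {ι : Type*} (s : Finset ι) {f : ι → ℝ}
    (hf : ∀ i ∈ s, 0 ≤ f i) {k : ℕ} (hk : k ≠ 0) :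
    ∑ i ∈ s, f i ^ k ≤ (∑ i ∈ s, f i) ^ k := by
  classical
  induction s using Finset.induction_on with
  | empty => simp [zero_pow hk]
  | insert a s ha ih =>
    obtain ⟨hfa, hfs⟩ := Finset.forall_mem_insert .. |>.mp hf
    rw [Finset.sum_insert ha, Finset.sum_insert ha]
    calc f a ^ k + ∑ i ∈ s, f i ^ k ≤ f a ^ k + (∑ i ∈ s, f i) ^ k := by grw [ih hfs]
      _ ≤ (f a + ∑ i ∈ s, f i) ^ k := pow_add_pow_le hfa (Finset.sum_nonneg hfs) hk

namespace Matrix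

theorem transpose_mul_self_apply_self {m n : Type*} [Fintype m] (A : Matrix m n ℝ) (j : n) :
    (Aᵀ * A) j j = ∑ i, A i j ^ 2 := by
  simp [mul_apply, sq]

variable {n : Type*} [Fintype n] [DecidableEq n]

theorem IsHermitian.pow_apply_self {B : Matrix n n ℝ} (hB : B.IsHermitian) (k : ℕ) (j : n) :
    (B ^ k) j j = ∑ l, hB.eigenvectorUnitary j l ^ 2 * hB.eigenvalues l ^ k := by
  conv_lhs => rw [hB.spectral_theorem, ← map_pow, diagonal_pow]
  simp only [Unitary.conjStarAlgAut_apply, mul_apply, diagonal_apply, mul_ite, mul_zero,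
    Finset.sum_ite_eq', Finset.mem_univ, if_true, star_apply]
  refine Finset.sum_congr rfl fun l _ => ?_
  simp only [Function.comp_apply, Pi.pow_apply, RCLike.ofReal_real_eq_id, id, star_trivial]
  ring

theorem PosSemidef.apply_self_pow_le_pow_apply_self {B : Matrix n n ℝ} (hB : B.PosSemidef)
    (k : ℕ) (j : n) : B j j ^ k ≤ (B ^ k) j j := by
  have hweights : ∑ l, hB.1.eigenvectorUnitary j l ^ 2 = 1 := by
    simpa using (hB.1.pow_apply_self 0 j).symm
  have hdiag := hB.1.pow_apply_self 1 j
  rw [pow_one] at hdiag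
  rw [hdiag, hB.1.pow_apply_self]
  simpa [smul_eq_mul] using (convexOn_pow k).map_sum_le (t := Finset.univ)
    (fun l _ => sq_nonneg _) hweights (fun l _ => hB.eigenvalues_nonneg l)

end Matrix

/-- Entrywise ℓ_{2α} norm is bounded by Tr[(AᵀA)^α] (the Schatten 2α-norm). -/
theorem entrywise_le_schatten (r s α : ℕ) (hα : 1 ≤ α)
    (A : Matrix (Fin r) (Fin s) ℝ) :
    ∑ i : Fin r, ∑ j : Fin s, |A i j| ^ (2 * α) ≤ ((Aᵀ * A) ^ α).trace := by
  have hB : (Aᵀ * A).PosSemidef := by simpa using posSemidef_conjTranspose_mul_self A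
  rw [Finset.sum_comm, trace]
  refine Finset.sum_le_sum fun j _ => ?_
  calc ∑ i, |A i j| ^ (2 * α) = ∑ i, (A i j ^ 2) ^ α := by simp only [pow_mul, sq_abs]
    _ ≤ (∑ i, A i j ^ 2) ^ α :=
      Finset.sum_pow_le_pow_sum _ (fun i _ => sq_nonneg _) (by omega)
    _ = (Aᵀ * A) j j ^ α := by rw [transpose_mul_self_apply_self]
    _ ≤ ((Aᵀ * A) ^ α) j j := hB.apply_self_pow_le_pow_apply_self α j
end

section
/- Let M be a real symmetric positive semidefinite s×s matrix and let α ≥ 1 be a natural number. Then the sum of the α-th powers of the diagonal entries of M is bounded by the trace of the α-th matrix power: ∑_{j=1}^{s} (M_{jj})^{α} ≤ Tr(M^{α}). -/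
/-!
Diagonalise `M = U D Uᴴ` with `U` unitary and `D` the (nonnegative) eigenvalues `λₖ`. Then
`M j j = ∑ₖ |U j k|² λₖ`, and the weights `|U j k|²` form a doubly stochastic matrix. Jensen's
inequality for the convex function `x ↦ x ^ α` on `[0, ∞)` bounds `(M j j) ^ α` by
`∑ₖ |U j k|² λₖ ^ α`; summing over `j`, the column sums `∑ⱼ |U j k|² = 1` leave `∑ₖ λₖ ^ α`,
which is the trace of `M ^ α`.
-/

open Matrix

namespace Matrix

variable {n 𝕜 : Type*} [Fintype n] [DecidableEq n] [RCLike 𝕜]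

lemma sum_norm_sq_apply_right_eq_one_of_mem_unitaryGroup {U : Matrix n n 𝕜}
    (hU : U ∈ unitaryGroup n 𝕜) (j : n) : ∑ k, ‖U j k‖ ^ 2 = 1 := by
  have h := congr_fun₂ (mem_unitaryGroup_iff.mp hU) j j
  simp only [mul_apply, star_apply, RCLike.star_def, RCLike.mul_conj, one_apply_eq] at h
  exact_mod_cast h

lemma sum_norm_sq_apply_left_eq_one_of_mem_unitaryGroup {U : Matrix n n 𝕜}
    (hU : U ∈ unitaryGroup n 𝕜) (k : n) : ∑ j, ‖U j k‖ ^ 2 = 1 := by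
  have h := congr_fun₂ (mem_unitaryGroup_iff'.mp hU) k k
  simp only [mul_apply, star_apply, RCLike.star_def, RCLike.conj_mul, one_apply_eq] at h
  exact_mod_cast h

namespace IsHermitian

variable {A : Matrix n n 𝕜}

lemma re_apply_self_eq_sum_eigenvalues (hA : A.IsHermitian) (j : n) :
    RCLike.re (A j j) =
      ∑ k, ‖(hA.eigenvectorUnitary : Matrix n n 𝕜) j k‖ ^ 2 * hA.eigenvalues k := by
  suffices A j j =
      ((∑ k, ‖(hA.eigenvectorUnitary : Matrix n n 𝕜) j k‖ ^ 2 * hA.eigenvalues k : ℝ) : 𝕜) by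
    rw [this, RCLike.ofReal_re]
  conv_lhs => rw [hA.spectral_theorem, Unitary.conjStarAlgAut_apply, mul_apply]
  push_cast
  refine Finset.sum_congr rfl fun k _ => ?_
  rw [mul_diagonal, star_apply, RCLike.star_def, Function.comp_apply, mul_right_comm,
    RCLike.mul_conj]

theorem sum_map_re_diag_le_sum_map_eigenvalues (hA : A.IsHermitian) {s : Set ℝ} {f : ℝ → ℝ}
    (hf : ConvexOn ℝ s f) (hs : ∀ k, hA.eigenvalues k ∈ s) :
    ∑ j, f (RCLike.re (A j j)) ≤ ∑ k, f (hA.eigenvalues k) := by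
  set U : Matrix n n 𝕜 := (hA.eigenvectorUnitary : Matrix n n 𝕜)
  have hU : U ∈ unitaryGroup n 𝕜 := hA.eigenvectorUnitary.2
  calc ∑ j, f (RCLike.re (A j j))
      = ∑ j, f (∑ k, ‖U j k‖ ^ 2 • hA.eigenvalues k) := by
        simp_rw [re_apply_self_eq_sum_eigenvalues hA, smul_eq_mul]
        rfl
    _ ≤ ∑ j, ∑ k, ‖U j k‖ ^ 2 • f (hA.eigenvalues k) := by
        gcongr with j
        exact hf.map_sum_le (fun k _ => by positivity)
          (sum_norm_sq_apply_right_eq_one_of_mem_unitaryGroup hU j) fun k _ => hs k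
    _ = ∑ k, f (hA.eigenvalues k) := by
        rw [Finset.sum_comm]
        simp_rw [← Finset.sum_smul, sum_norm_sq_apply_left_eq_one_of_mem_unitaryGroup hU, one_smul]

lemma trace_cfc (hA : A.IsHermitian) (f : ℝ → ℝ) :
    (cfc f A).trace = ∑ k, (f (hA.eigenvalues k) : 𝕜) := by
  rw [hA.cfc_eq, IsHermitian.cfc, Unitary.conjStarAlgAut_apply, trace_mul_cycle,
    Unitary.coe_star_mul_self, one_mul, trace_diagonal]
  rfl

end IsHermitian
end Matrix

theorem diag_pow_sum_le_trace_pow_general (s α : ℕ)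
    (M : Matrix (Fin s) (Fin s) ℝ) (hM : M.PosSemidef) :
    ∑ j : Fin s, (M j j) ^ α ≤ (M ^ α).trace := by
  have hH := hM.isHermitian
  rw [← cfc_pow_id (R := ℝ) M α hH.isSelfAdjoint, hH.trace_cfc]
  exact hH.sum_map_re_diag_le_sum_map_eigenvalues (convexOn_pow α) hM.eigenvalues_nonneg

/-- For a real symmetric positive semidefinite matrix M and α ≥ 1,
∑_j (M_{jj})^α ≤ Tr(M^α). -/
theorem diag_pow_sum_le_trace_pow (s α : ℕ) (hα : 1 ≤ α)
    (M : Matrix (Fin s) (Fin s) ℝ) (hM : M.PosSemidef) :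
    ∑ j : Fin s, (M j j) ^ α ≤ (M ^ α).trace :=
  diag_pow_sum_le_trace_pow_general s α M hM
end

section
/- Let ν, μ be real numbers with ν² + μ² = 1, and let Γ be the 4×4 real matrix with rows (0, ν, μ, 0), (−ν, 0, 0, μ), (−μ, 0, 0, −ν), (0, −μ, ν, 0). Then for every natural number α ≥ 1, the sum over all 16 subsets I ⊆ {1,2,3,4} of the α-th powers of the absolute values of the principal minors of Γ satisfies ∑_{I ⊆ {1,2,3,4}} |det(Γ|_I)|^{α} = 2(1 + ν^{2α} + μ^{2α}). -/
open Matrix BigOperators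

/-- The principal minor of `A` indexed by the subset `I`. -/
def principalMinor {n : ℕ} (A : Matrix (Fin n) (Fin n) ℝ) (I : Finset (Fin n)) : ℝ :=
  (A.submatrix (fun i : I => (i : Fin n)) (fun j : I => (j : Fin n))).det

/-!
Γ is skew-symmetric, so all its principal minors of odd size vanish, each 2 × 2 principal minor
on `{i, j}` is `Γ i j ^ 2`, and the full minor is `det Γ = (ν² + μ²)² = 1`. The six entries above
the diagonal are `ν, μ, 0, 0, μ, -ν`, which gives `1 + 2 ν^{2α} + 2 μ^{2α} + 1`.
-/

theorem Matrix.det_eq_zero_of_transpose_eq_neg {m R : Type*} [Fintype m] [DecidableEq m]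
    [CommRing R] [IsAddTorsionFree R] {A : Matrix m m R} (hA : Aᵀ = -A)
    (hm : Odd (Fintype.card m)) : A.det = 0 :=
  self_eq_neg.mp <| calc
    A.det = Aᵀ.det := A.det_transpose.symm
    _ = -A.det := by rw [hA, det_neg, hm.neg_one_pow, neg_one_mul]

section principalMinor

variable {n : ℕ}

theorem principalMinor_empty (A : Matrix (Fin n) (Fin n) ℝ) : principalMinor A ∅ = 1 :=
  det_isEmpty

theorem principalMinor_univ (A : Matrix (Fin n) (Fin n) ℝ) :
    principalMinor A Finset.univ = A.det :=
  det_submatrix_equiv_self (Equiv.subtypeUnivEquiv Finset.mem_univ) A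

theorem principalMinor_pair (A : Matrix (Fin n) (Fin n) ℝ) {a b : Fin n} (hab : a ≠ b) :
    principalMinor A {a, b} = A a a * A b b - A a b * A b a := by
  have hinj : Function.Injective ![a, b] := by
    intro i j; fin_cases i <;> fin_cases j <;> simp [hab, hab.symm]
  let e : Fin 2 ≃ ({a, b} : Finset (Fin n)) := (Equiv.ofInjective _ hinj).trans
    (Equiv.subtypeEquivRight fun x => by simp [eq_comm, or_comm])
  rw [principalMinor, ← det_submatrix_equiv_self e, det_fin_two]
  rfl

variable {A : Matrix (Fin n) (Fin n) ℝ}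

theorem principalMinor_eq_zero_of_transpose_eq_neg (hA : Aᵀ = -A) {I : Finset (Fin n)}
    (hI : Odd I.card) : principalMinor A I = 0 :=
  det_eq_zero_of_transpose_eq_neg (by rw [transpose_submatrix, hA]; rfl)
    (by rwa [Fintype.card_coe])

theorem principalMinor_pair_of_transpose_eq_neg (hA : Aᵀ = -A) {a b : Fin n} (hab : a ≠ b) :
    principalMinor A {a, b} = A a b ^ 2 := by
  have hdiag (i : Fin n) : A i i = 0 := self_eq_neg.mp (by simpa using congrFun₂ hA i i)
  have hba : A b a = -A a b := by simpa using congrFun₂ hA a b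
  rw [principalMinor_pair A hab, hdiag, hba]
  ring

theorem sum_abs_principalMinor_pow_of_transpose_eq_neg (hA : Aᵀ = -A) {α : ℕ} (hα : α ≠ 0) :
    ∑ I : Finset (Fin n), |principalMinor A I| ^ α
      = ∑ I with Even I.card, |principalMinor A I| ^ α := by
  refine (Finset.sum_filter_of_ne fun I _ hI => ?_).symm
  by_contra hodd
  rw [Nat.not_even_iff_odd] at hodd
  simp [principalMinor_eq_zero_of_transpose_eq_neg hA hodd, hα] at hI

end principalMinor

theorem sum_abs_principalMinor_pow_fin_four {A : Matrix (Fin 4) (Fin 4) ℝ} (hA : Aᵀ = -A)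
    {α : ℕ} (hα : α ≠ 0) :
    ∑ I : Finset (Fin 4), |principalMinor A I| ^ α
      = 1 + A 0 1 ^ (2 * α) + A 0 2 ^ (2 * α) + A 0 3 ^ (2 * α) + A 1 2 ^ (2 * α)
          + A 1 3 ^ (2 * α) + A 2 3 ^ (2 * α) + |A.det| ^ α := by
  have heven : ({I : Finset (Fin 4) | Even I.card} : Finset _) =
      {∅, {0, 1}, {0, 2}, {0, 3}, {1, 2}, {1, 3}, {2, 3}, Finset.univ} := by decide
  have hpair (a b : Fin 4) (hab : a ≠ b) : |principalMinor A {a, b}| ^ α = A a b ^ (2 * α) := by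
    rw [principalMinor_pair_of_transpose_eq_neg hA hab, abs_sq, pow_mul]
  rw [sum_abs_principalMinor_pow_of_transpose_eq_neg hA hα, heven]
  repeat rw [Finset.sum_insert (by decide)]
  rw [Finset.sum_singleton, principalMinor_empty, principalMinor_univ, hpair 0 1 (by decide),
    hpair 0 2 (by decide), hpair 0 3 (by decide), hpair 1 2 (by decide), hpair 1 3 (by decide),
    hpair 2 3 (by decide), abs_one, one_pow]
  simp only [add_assoc]

/-- For the canonical 4×4 covariance block of one entangled fermionic mode pair,
the sum over all principal minors of the α-th powers of their absolute values is
2(1 + ν^{2α} + μ^{2α}). -/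
theorem sum_abs_principalMinor_pow_canonicalBlock (ν μ : ℝ) (hνμ : ν ^ 2 + μ ^ 2 = 1)
    (α : ℕ) (hα : 1 ≤ α) :
    ∑ I : Finset (Fin 4),
        |principalMinor !![0, ν, μ, 0; -ν, 0, 0, μ; -μ, 0, 0, -ν; 0, -μ, ν, 0] I| ^ α
      = 2 * (1 + ν ^ (2 * α) + μ ^ (2 * α)) := by
  set Γ := !![0, ν, μ, 0; -ν, 0, 0, μ; -μ, 0, 0, -ν; 0, -μ, ν, 0]
  have hskew : Γᵀ = -Γ := by
    ext i j; fin_cases i <;> fin_cases j <;> simp [Γ]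
  have hdet : Γ.det = (ν ^ 2 + μ ^ 2) ^ 2 := by
    simp [Γ, det_succ_row_zero, Fin.sum_univ_succ, Fin.succAbove]
    ring
  have hα0 : α ≠ 0 := by omega
  rw [sum_abs_principalMinor_pow_fin_four hskew hα0, hdet, hνμ]
  simp [Γ, hα0]
  ring
end

section
/- Let φ be a real number and let ψ ∈ ℂ⁴ be the two-qubit vector ψ = (cos φ, 0, 0, i·sin φ) in the basis |00⟩, |01⟩, |10⟩, |11⟩. Let σ₀ = [[1,0],[0,1]], σ₁ = [[0,1],[1,0]], σ₂ = [[0,−i],[i,0]], σ₃ = [[1,0],[0,−1]] be the 2×2 Pauli matrices. Then for every natural number α ≥ 1, ∑_{a=0}^{3} ∑_{b=0}^{3} |⟨ψ, (σ_a ⊗ σ_b) ψ⟩|^{2α} = 2(1 + cos(2φ)^{2α} + sin(2φ)^{2α}), where ⊗ is the Kronecker product and ⟨·,·⟩ the standard Hermitian inner product on ℂ⁴. -/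
/-!
Since `ψ` is supported on `|00⟩` and `|11⟩`, the expectation `⟨ψ, (A ⊗ B) ψ⟩` only sees the entries
`A i j * B i j`, and for the Pauli strings it is real: `1` for `σ₀ ⊗ σ₀` and `σ₃ ⊗ σ₃`, `cos 2φ`
for `σ₀ ⊗ σ₃` and `σ₃ ⊗ σ₀`, `sin 2φ` for `σ₁ ⊗ σ₂` and `σ₂ ⊗ σ₁`, and `0` for the other ten. The even
power `2α ≥ 2` kills the zeros and removes the absolute values.
-/

open Matrix Kronecker BigOperators

/-- The four Pauli matrices σ₀, σ₁, σ₂, σ₃. -/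
def pauli : Fin 4 → Matrix (Fin 2) (Fin 2) ℂ :=
  ![!![1, 0; 0, 1], !![0, 1; 1, 0], !![0, -Complex.I; Complex.I, 0], !![1, 0; 0, -1]]

/-- The two-qubit state ψ = cos(φ)|00⟩ + i·sin(φ)|11⟩. -/
noncomputable def pairState (φ : ℝ) : Fin 2 × Fin 2 → ℂ := fun p =>
  if p = (0, 0) then (Real.cos φ : ℂ)
  else if p = (1, 1) then Complex.I * (Real.sin φ : ℂ)
  else 0

theorem star_dotProduct_kronecker_mulVec_of_supported_on_diagonal {R : Type*} [CommSemiring R]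
    [StarRing R] (A B : Matrix (Fin 2) (Fin 2) R) (ψ : Fin 2 × Fin 2 → R)
    (h01 : ψ (0, 1) = 0) (h10 : ψ (1, 0) = 0) :
    star ψ ⬝ᵥ ((A ⊗ₖ B) *ᵥ ψ) =
      star (ψ (0, 0)) * ψ (0, 0) * (A 0 0 * B 0 0) + star (ψ (0, 0)) * ψ (1, 1) * (A 0 1 * B 0 1)
        + star (ψ (1, 1)) * ψ (0, 0) * (A 1 0 * B 1 0)
        + star (ψ (1, 1)) * ψ (1, 1) * (A 1 1 * B 1 1) := by
  simp only [dotProduct, mulVec, Fintype.sum_prod_type, Fin.sum_univ_two, kroneckerMap_apply,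
    h01, h10, Pi.star_apply, star_zero]
  ring

theorem star_pairState_dotProduct_kronecker_mulVec (φ : ℝ) (A B : Matrix (Fin 2) (Fin 2) ℂ) :
    star (pairState φ) ⬝ᵥ ((A ⊗ₖ B) *ᵥ pairState φ) =
      Real.cos φ ^ 2 * (A 0 0 * B 0 0) + Real.sin φ ^ 2 * (A 1 1 * B 1 1)
        + Real.sin φ * Real.cos φ * (Complex.I * A 0 1 * B 0 1 - Complex.I * A 1 0 * B 1 0) := by
  rw [star_dotProduct_kronecker_mulVec_of_supported_on_diagonal]
  · simp only [pairState, Fin.isValue, ↓reduceIte, RCLike.star_def, Complex.conj_ofReal,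
      Prod.mk.injEq, one_ne_zero, and_self, star_mul', Complex.conj_I, neg_mul]
    linear_combination -(Real.sin φ : ℂ) ^ 2 * (A 1 1 * B 1 1) * Complex.I_sq
  all_goals simp [pairState]

noncomputable def pairCorrelation (φ : ℝ) : Matrix (Fin 4) (Fin 4) ℝ :=
  !![1, 0, 0, Real.cos (2 * φ);
     0, 0, Real.sin (2 * φ), 0;
     0, Real.sin (2 * φ), 0, 0;
     Real.cos (2 * φ), 0, 0, 1]

theorem star_pairState_dotProduct_pauli_kronecker_mulVec (φ : ℝ) (a b : Fin 4) :
    star (pairState φ) ⬝ᵥ ((pauli a ⊗ₖ pauli b) *ᵥ pairState φ) = pairCorrelation φ a b := by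
  rw [star_pairState_dotProduct_kronecker_mulVec]
  fin_cases a <;> fin_cases b <;>
    simp [pauli, pairCorrelation, Real.cos_two_mul', Real.sin_two_mul] <;> ring

/-- For ψ = cos(φ)|00⟩ + i sin(φ)|11⟩ and α ≥ 1, the sum over all two-qubit Pauli
strings of |⟨ψ, (σ_a ⊗ σ_b) ψ⟩|^{2α} equals 2(1 + cos(2φ)^{2α} + sin(2φ)^{2α}). -/
theorem pauli_string_moment (φ : ℝ) (α : ℕ) (hα : 1 ≤ α) :
    ∑ a : Fin 4, ∑ b : Fin 4,
        ‖star (pairState φ) ⬝ᵥ ((pauli a ⊗ₖ pauli b).mulVec (pairState φ))‖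
          ^ (2 * α)
      = 2 * (1 + Real.cos (2 * φ) ^ (2 * α) + Real.sin (2 * φ) ^ (2 * α)) := by
  simp_rw [star_pairState_dotProduct_pauli_kronecker_mulVec, Complex.norm_real, Real.norm_eq_abs,
    (even_two_mul α).pow_abs]
  simp only [Fin.sum_univ_four, pairCorrelation, of_apply, cons_val', cons_val_fin_one,
    cons_val_zero, cons_val_one, cons_val, one_pow, zero_pow (by omega : 2 * α ≠ 0), add_zero,
    zero_add]
  ring
end

section
/- The definite integral ∫₀¹ log(1 − x + x²) / √(x(1 − x)) dx equals −2π·log(8 − 4√3). Equivalently, −(1/(2π)) ∫₀¹ log(1 − x + x²)/√(x(1−x)) dx = log(8 − 4√3), which is the thermodynamic nonlocal-magic density 𝒥(1/2) of the Gaussian Haar ensemble at the symmetric bipartition. -/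
/-!
Substituting `x = (1 - cos θ) / 2` turns the arcsine weight `dx / √(x (1 - x))` into `dθ` on
`(0, π)` and the numerator into `log ((7 + cos 2θ) / 8)`. For `b = 4√3 - 7` the quantity
`7 + cos u` is proportional to `1 - 2 b cos u + b² = |e^{iu} - b|²`, and since `|b| < 1` the mean
of `log |e^{iu} - b|` over the unit circle vanishes (Jensen's formula). Only the constant of
proportionality survives, giving `-2π log (8 - 4√3)`.
-/

open Real intervalIntegral MeasureTheory Set

theorem sq_norm_circleMap_zero_one_sub_ofReal (b θ : ℝ) :
    ‖circleMap 0 1 θ - b‖ ^ 2 = 1 - 2 * b * cos θ + b ^ 2 := by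
  rw [Complex.sq_norm, Complex.normSq_apply]
  simp only [circleMap_zero, Complex.ofReal_one, one_mul, Complex.sub_re, Complex.sub_im,
    Complex.exp_ofReal_mul_I_re, Complex.exp_ofReal_mul_I_im, Complex.ofReal_re,
    Complex.ofReal_im, sub_zero]
  linear_combination sin_sq_add_cos_sq θ

theorem integral_log_one_sub_two_mul_cos_add_sq (b : ℝ) :
    ∫ θ in 0..2 * π, log (1 - 2 * b * cos θ + b ^ 2) = 4 * π * log⁺ b := by
  have h := circleAverage_log_norm_sub_const_eq_posLog (a := (b : ℂ))
  rw [circleAverage_def, Complex.norm_real, norm_eq_abs, posLog_abs, smul_eq_mul] at h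
  simp_rw [← sq_norm_circleMap_zero_one_sub_ofReal, log_pow, Nat.cast_ofNat,
    intervalIntegral.integral_const_mul]
  field_simp at h
  linarith

theorem image_one_sub_cos_div_two_Ioo :
    (fun θ => (1 - cos θ) / 2) '' Ioo 0 π = Ioo 0 1 := by
  ext x
  constructor
  · rintro ⟨θ, hθ, rfl⟩
    have hcos := mapsTo_cos_Ioo hθ
    constructor <;> linarith [hcos.1, hcos.2]
  · rintro ⟨hx0, hx1⟩
    refine ⟨arccos (1 - 2 * x),
      ⟨arccos_pos.2 (by linarith), arccos_lt_pi.2 (by linarith)⟩, ?_⟩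
    simp only [cos_arccos (by linarith : -1 ≤ 1 - 2 * x) (by linarith)]
    ring

-- No integrability assumption: the change of variables along an injective map holds for every
-- integrand, junk value `0` included.
theorem integral_div_sqrt_mul_one_sub (g : ℝ → ℝ) :
    ∫ x in 0..1, g x / √(x * (1 - x)) = ∫ θ in 0..π, g ((1 - cos θ) / 2) := by
  rw [integral_of_le zero_le_one, integral_of_le pi_pos.le, integral_Ioc_eq_integral_Ioo,
    integral_Ioc_eq_integral_Ioo, ← image_one_sub_cos_div_two_Ioo,
    integral_image_eq_integral_abs_deriv_smul measurableSet_Ioo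
      (fun θ _ => (((hasDerivAt_cos θ).const_sub 1).div_const 2).hasDerivWithinAt)
      (fun θ₁ h₁ θ₂ h₂ h => injOn_cos (Ioo_subset_Icc_self h₁) (Ioo_subset_Icc_self h₂)
        (by simpa using h))]
  refine setIntegral_congr_fun measurableSet_Ioo fun θ hθ => ?_
  have hsin : 0 < sin θ := sin_pos_of_pos_of_lt_pi hθ.1 hθ.2
  have hsq : (1 - cos θ) / 2 * (1 - (1 - cos θ) / 2) = (sin θ / 2) ^ 2 := by
    linear_combination -sin_sq_add_cos_sq θ / 4
  rw [hsq, sqrt_sq (by positivity), neg_neg, abs_of_pos (by positivity), smul_eq_mul]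
  field_simp

/-- ∫₀¹ log(1 − x + x²)/√(x(1−x)) dx = −2π·log(8 − 4√3): the thermodynamic
nonlocal-magic density of the Gaussian Haar ensemble at the symmetric bipartition. -/
theorem arcsine_log_integral :
    ∫ x in (0 : ℝ)..1, Real.log (1 - x + x ^ 2) / Real.sqrt (x * (1 - x))
      = -2 * Real.pi * Real.log (8 - 4 * Real.sqrt 3) := by
  set b := 4 * √3 - 7
  have hs : √3 ^ 2 = 3 := sq_sqrt zero_le_three
  have hs_bounds : 3 / 2 < √3 ∧ √3 < 7 / 4 := by constructor <;> nlinarith [sqrt_nonneg 3]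
  have hpos (c : ℝ) (hc : -1 ≤ c) : 0 < 1 - 2 * b * c + b ^ 2 := by nlinarith
  -- `b ^ 2 + 14 * b + 1 = 0`, so `1 - 2 * b * c + b ^ 2 = (8 - 4 * √3) ^ 2 * (7 + c) / 8`.
  have hfactor (c : ℝ) (hc : -1 ≤ c) :
      log ((7 + c) / 8) = log (1 - 2 * b * c + b ^ 2) - 2 * log (8 - 4 * √3) := by
    rw [show 2 * log (8 - 4 * √3) = log ((8 - 4 * √3) ^ 2) by norm_num [log_pow],
      ← log_div (hpos c hc).ne' (by nlinarith)]
    congr 1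
    rw [eq_div_iff (by nlinarith)]
    linear_combination (2 * c - 2) * hs
  have hposLog : log⁺ b = 0 := (posLog_eq_zero_iff b).2 (abs_le.2 ⟨by linarith, by linarith⟩)
  have hint : IntervalIntegrable (fun θ => log (1 - 2 * b * cos (2 * θ) + b ^ 2)) volume 0 π :=
    (Continuous.log (by fun_prop) fun θ => (hpos _ (neg_one_le_cos _)).ne').intervalIntegrable _ _
  calc ∫ x in (0 : ℝ)..1, log (1 - x + x ^ 2) / √(x * (1 - x))
      = ∫ θ in 0..π, log ((7 + cos (2 * θ)) / 8) := by
        rw [integral_div_sqrt_mul_one_sub]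
        congr! 2 with θ
        rw [cos_two_mul]
        ring_nf
    _ = ∫ θ in 0..π, (log (1 - 2 * b * cos (2 * θ) + b ^ 2) - 2 * log (8 - 4 * √3)) :=
        integral_congr fun θ _ => hfactor _ (neg_one_le_cos _)
    _ = 2⁻¹ * (∫ θ in 0..2 * π, log (1 - 2 * b * cos θ + b ^ 2))
          - π * (2 * log (8 - 4 * √3)) := by
        rw [intervalIntegral.integral_sub hint intervalIntegrable_const,
          integral_comp_mul_left (fun θ => log (1 - 2 * b * cos θ + b ^ 2)) two_ne_zero,
          mul_zero, smul_eq_mul, intervalIntegral.integral_const, sub_zero, smul_eq_mul]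
    _ = -2 * π * log (8 - 4 * √3) := by
        rw [integral_log_one_sub_two_mul_cos_add_sq, hposLog]
        ring
end
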